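/- arXiv:2510.22980 — 6 statements merged into one kernel-verified Lean document; each statement's English description precedes it below -/
import Mathlib

section
/- Fix k ≥ 2, μ > 0, σ > 0 and class priors p_1, …, p_k > 0 with Σ_{c=1}^k p_c = 1. Let m be an index with p_m = min_c p_c. Set snr = μ²/σ², α_c = μ p_c/(μ² p_c + σ²) for each c, and t* = α_m. Define α_c^{GF}(t) = α_c (1 − exp(−(σ² + p_c μ²) t)) and α_c^{Spec}(t) = min(t, α_c). For a trajectory α = (α_1(·), …, α_k(·)) define the per-class loss L_c(α, t) = ½ (1 − μ α_c(t))² + ½ σ² Σ_{j=1}^k α_j(t)², and the balanced loss L_bal(α, t) = (1/k) Σ_{c=1}^k L_c(α, t). Assume μ ≥ 1, p_m ≤ 1/(3·snr + 4k), and p_m ≤ (k − 2μ)/(2μ·snr + k·snr + 2k²). Then for every t ∈ (0, t*], L_bal(α^{GF}, t) − L_bal(α^{Spec}, t) ≥ μ t / 2. -/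
/-!
For `t ≤ t*` no spectral component has reached its limit, so `α_c^{Spec}(t) = t` for every `c`,
while `1 - e^{-x} ≤ x` gives `α_c^{GF}(t) ≤ μ p_c t`, hence `Σ_c α_c^{GF}(t) ≤ μ t`.
The balanced loss of any trajectory is `½ - (μ/k) Σ_c α_c + ((μ²/k + σ²)/2) Σ_c α_c²`, so the gap
is at least `μ t - μ² t / k - (μ² + k σ²) t² / 2`. This exceeds `μ t / 2` as soon as
`k (μ² + k σ²) t ≤ μ (k - 2μ)`, which follows from `t ≤ t* ≤ μ p_m / σ²` and the second bound on `p_m`.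
-/

/-- Gradient-flow trajectory of the spectral component with prior `pc`:
`α_c^{GF}(t) = α_c (1 − exp(−(σ² + p_c μ²) t))` with `α_c = μ p_c/(μ² p_c + σ²)`. -/
noncomputable def alphaGF (μ σ pc t : ℝ) : ℝ :=
  (μ * pc / (μ ^ 2 * pc + σ ^ 2)) * (1 - Real.exp (-(σ ^ 2 + pc * μ ^ 2) * t))

/-- Spectral-gradient-flow trajectory of the spectral component with prior `pc`:
`α_c^{Spec}(t) = min(t, α_c)` with `α_c = μ p_c/(μ² p_c + σ²)`. -/
noncomputable def alphaSpec (μ σ pc t : ℝ) : ℝ :=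
  min t (μ * pc / (μ ^ 2 * pc + σ ^ 2))

/-- Per-class population loss of a trajectory `α`:
`L_c(α, t) = ½ (1 − μ α_c(t))² + ½ σ² Σ_j α_j(t)²`. -/
noncomputable def classLoss {k : ℕ} (μ σ : ℝ) (α : Fin k → ℝ → ℝ) (c : Fin k) (t : ℝ) : ℝ :=
  (1 / 2) * (1 - μ * α c t) ^ 2 + (1 / 2) * σ ^ 2 * ∑ j, (α j t) ^ 2

/-- Balanced population loss: `L_bal(α, t) = (1/k) Σ_c L_c(α, t)`. -/
noncomputable def balancedLoss {k : ℕ} (μ σ : ℝ) (α : Fin k → ℝ → ℝ) (t : ℝ) : ℝ :=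
  (1 / (k : ℝ)) * ∑ c, classLoss μ σ α c t

open Finset

/-- The limit `α_c` of both trajectories. -/
noncomputable def alphaStar (μ σ pc : ℝ) : ℝ :=
  μ * pc / (μ ^ 2 * pc + σ ^ 2)

lemma alphaStar_mono {μ σ p q : ℝ} (hμ : 0 ≤ μ) (hσ : σ ≠ 0) (hp : 0 ≤ p) (hpq : p ≤ q) :
    alphaStar μ σ p ≤ alphaStar μ σ q := by
  have hσ2 : 0 < σ ^ 2 := by positivity
  unfold alphaStar
  rw [div_le_div_iff₀ (by positivity) (by nlinarith [sq_nonneg μ])]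
  nlinarith [mul_le_mul_of_nonneg_left hpq (mul_nonneg hμ hσ2.le)]

lemma alphaStar_le {μ σ p : ℝ} (hμ : 0 ≤ μ) (hσ : σ ≠ 0) (hp : 0 ≤ p) :
    alphaStar μ σ p ≤ μ * p / σ ^ 2 :=
  div_le_div_of_nonneg_left (mul_nonneg hμ hp) (by positivity)
    (le_add_of_nonneg_left (by positivity))

lemma alphaGF_le {μ σ p : ℝ} (hμ : 0 ≤ μ) (hσ : σ ≠ 0) (hp : 0 ≤ p) (t : ℝ) :
    alphaGF μ σ p t ≤ μ * p * t := by
  have hexp : 1 - Real.exp (-(σ ^ 2 + p * μ ^ 2) * t) ≤ (μ ^ 2 * p + σ ^ 2) * t := by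
    linarith [Real.add_one_le_exp (-(σ ^ 2 + p * μ ^ 2) * t)]
  calc alphaGF μ σ p t ≤ μ * p / (μ ^ 2 * p + σ ^ 2) * ((μ ^ 2 * p + σ ^ 2) * t) :=
        mul_le_mul_of_nonneg_left hexp (by positivity)
    _ = μ * p * t := by field_simp

lemma balancedLoss_eq {k : ℕ} (hk : 0 < k) (μ σ : ℝ) (α : Fin k → ℝ → ℝ) (t : ℝ) :
    balancedLoss μ σ α t
      = 1 / 2 - μ / k * ∑ c, α c t + (μ ^ 2 / k + σ ^ 2) / 2 * ∑ c, α c t ^ 2 := by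
  have hk' : (k : ℝ) ≠ 0 := by positivity
  simp only [balancedLoss, classLoss, sub_sq, sum_add_distrib, sum_sub_distrib, ← mul_sum,
    mul_pow, sum_const, card_univ, Fintype.card_fin, nsmul_eq_mul]
  field_simp
  ring

lemma balancedLoss_sub_ge {k : ℕ} (hk : 0 < k) {μ σ t : ℝ} (hμ : 0 ≤ μ) (ht : 0 ≤ t)
    {α β : Fin k → ℝ → ℝ} (hα : ∑ c, α c t ≤ μ * t) (hβ : ∀ c, β c t = t)
    (hgap : k * (μ ^ 2 + k * σ ^ 2) * t ≤ μ * (k - 2 * μ)) :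
    μ * t / 2 ≤ balancedLoss μ σ α t - balancedLoss μ σ β t := by
  have hk' : (0 : ℝ) < k := by positivity
  rw [balancedLoss_eq hk, balancedLoss_eq hk]
  simp only [hβ, sum_const, card_univ, Fintype.card_fin, nsmul_eq_mul]
  have key : 0 ≤ 2 * μ * (μ * t - ∑ c, α c t)
      + t * (μ * (k - 2 * μ) - k * (μ ^ 2 + k * σ ^ 2) * t) :=
    add_nonneg (mul_nonneg (by positivity) (by linarith)) (mul_nonneg ht (by linarith))
  have hS : 0 ≤ (μ ^ 2 + k * σ ^ 2) * ∑ c, α c t ^ 2 := by positivity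
  field_simp
  linarith

lemma gap_of_prior_le {k μ σ snr p t : ℝ} (hk : 0 < k) (hμ : 0 ≤ μ) (hσ : σ ≠ 0) (hp : 0 ≤ p)
    (hsnr : snr = μ ^ 2 / σ ^ 2) (ht : t * σ ^ 2 ≤ μ * p)
    (hpk : p ≤ (k - 2 * μ) / (2 * μ * snr + k * snr + 2 * k ^ 2)) :
    k * (μ ^ 2 + k * σ ^ 2) * t ≤ μ * (k - 2 * μ) := by
  have hsnr0 : 0 ≤ snr := hsnr ▸ by positivity
  have hμ2 : μ ^ 2 = snr * σ ^ 2 := by rw [hsnr]; field_simp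
  have hpk' : p * (2 * μ * snr + k * snr + 2 * k ^ 2) ≤ k - 2 * μ :=
    (le_div_iff₀ (by positivity)).mp hpk
  calc k * (μ ^ 2 + k * σ ^ 2) * t = k * (snr + k) * (t * σ ^ 2) := by rw [hμ2]; ring
    _ ≤ k * (snr + k) * (μ * p) := by gcongr
    _ ≤ μ * (p * (2 * μ * snr + k * snr + 2 * k ^ 2)) := by
        have hslack : 0 ≤ 2 * μ * snr + k ^ 2 := by positivity
        linarith [mul_nonneg (mul_nonneg hμ hp) hslack]
    _ ≤ μ * (k - 2 * μ) := by gcongr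

theorem stmt7_general (k : ℕ) (μ σ : ℝ) (hμ : 0 < μ) (hσ : 0 < σ)
    (p : Fin k → ℝ) (hp : ∀ c, 0 < p c) (hsum : ∑ c, p c = 1)
    (m : Fin k) (hm : ∀ c, p m ≤ p c)
    (snr : ℝ) (hsnr : snr = μ ^ 2 / σ ^ 2)
    (tstar : ℝ) (htstar : tstar = μ * p m / (μ ^ 2 * p m + σ ^ 2))
    (hpm2 : p m ≤ ((k : ℝ) - 2 * μ) / (2 * μ * snr + k * snr + 2 * (k : ℝ) ^ 2)) :
    ∀ t : ℝ, 0 < t → t ≤ tstar →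
      balancedLoss μ σ (fun c => alphaGF μ σ (p c)) t
          - balancedLoss μ σ (fun c => alphaSpec μ σ (p c)) t ≥ μ * t / 2 := by
  intro t ht htle
  have htm : t ≤ alphaStar μ σ (p m) := htle.trans_eq htstar
  have hGF : ∑ c, alphaGF μ σ (p c) t ≤ μ * t :=
    calc ∑ c, alphaGF μ σ (p c) t ≤ ∑ c, μ * p c * t :=
          sum_le_sum fun c _ => alphaGF_le hμ.le hσ.ne' (hp c).le t
      _ = μ * t := by rw [← sum_mul, ← mul_sum, hsum, mul_one]
  have hSpec (c : Fin k) : alphaSpec μ σ (p c) t = t :=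
    min_eq_left (htm.trans (alphaStar_mono hμ.le hσ.ne' (hp m).le (hm c)))
  have htσ : t * σ ^ 2 ≤ μ * p m :=
    (le_div_iff₀ (by positivity)).mp (htm.trans (alphaStar_le hμ.le hσ.ne' (hp m).le))
  exact balancedLoss_sub_ge m.pos hμ.le ht.le hGF hSpec
    (gap_of_prior_le (by exact_mod_cast m.pos) hμ.le hσ.ne' (hp m).le hsnr htσ hpm2)

/-- balanced-loss part of Theorem 1, full version. Under the class-imbalanced
data model, if `μ ≥ 1`, `p_m ≤ 1/(3·snr + 4k)` and
`p_m ≤ (k − 2μ)/(2μ·snr + k·snr + 2k²)`, then for every `t ∈ (0, t*]` with `t* = α_m`,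
the balanced loss of gradient flow exceeds that of spectral gradient flow by at least
`μ t / 2`. -/
theorem stmt7 (k : ℕ) (hk : 2 ≤ k) (μ σ : ℝ) (hμ : 0 < μ) (hσ : 0 < σ)
    (p : Fin k → ℝ) (hp : ∀ c, 0 < p c) (hsum : ∑ c, p c = 1)
    (m : Fin k) (hm : ∀ c, p m ≤ p c)
    (snr : ℝ) (hsnr : snr = μ ^ 2 / σ ^ 2)
    (tstar : ℝ) (htstar : tstar = μ * p m / (μ ^ 2 * p m + σ ^ 2))
    (hμ1 : 1 ≤ μ)
    (hpm : p m ≤ 1 / (3 * snr + 4 * k))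
    (hpm2 : p m ≤ ((k : ℝ) - 2 * μ) / (2 * μ * snr + k * snr + 2 * (k : ℝ) ^ 2)) :
    ∀ t : ℝ, 0 < t → t ≤ tstar →
      balancedLoss μ σ (fun c => alphaGF μ σ (p c)) t
          - balancedLoss μ σ (fun c => alphaSpec μ σ (p c)) t ≥ μ * t / 2 :=
  stmt7_general k μ σ hμ hσ p hp hsum m hm snr hsnr tstar htstar hpm2
end

section
/- Fix k ≥ 2, μ > 0, σ > 0 and class priors p_1, …, p_k > 0 with Σ_{c=1}^k p_c = 1. Let m be an index with p_m = min_c p_c and M an index with p_M = max_c p_c. Set snr = μ²/σ², α_c = μ p_c/(μ² p_c + σ²), t* = α_m, and α_c^{Spec}(t) = min(t, α_c). Let α^{NGF} : [0, t*] → ℝ^k be any differentiable function with α^{NGF}(0) = 0 satisfying, for all t ∈ [0, t*] and all i, (d/dt) α_i^{NGF}(t) = r_i(t)/R(t), where r_i(t) = μ p_i − (μ² p_i + σ²) α_i^{NGF}(t) and R(t) = sqrt(Σ_{j=1}^k r_j(t)²) > 0. For a trajectory α define L_c(α, t) = ½ (1 − μ α_c(t))² + ½ σ² Σ_{j=1}^k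 α_j(t)² and L_bal(α, t) = (1/k) Σ_{c=1}^k L_c(α, t). Assume p_m < 1/(snr + 2k) and p_M − p_m ≥ 2 (p_m·snr + 1)² / (k (1 − p_m(snr + 2k))). Then for every t ∈ (0, t*], L_bal(α^{NGF}, t) − L_bal(α^{Spec}, t) ≥ μ t / 2. -/
/-!
Up to `t* = α_m` every coordinate of the NGF trajectory moves with speed at most one, so
`α_c(t) ≤ t ≤ α_m ≤ α_c` and all residuals stay nonnegative; hence `α ≥ 0` and `Σ_c r_c ≤ μ`.
The residual of class `M` stays at least `μ (p_M - p_m) / (p_m snr + 1)`, which bounds the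
normalizer `R` from below, so the total mass `Σ_c α_c(t)` grows at rate at most
`(p_m snr + 1) / (p_M - p_m)`, whereas SpecGF moves every coordinate at unit speed. Dropping the
quadratic terms of the NGF loss and computing the SpecGF loss exactly, the gap condition on
`p_M - p_m` turns this into the bound `μ t / 2`.
-/

open Set Finset

section NormalizedFlow

variable {ι : Type*}

lemma abs_le_sqrt_sum_sq [Fintype ι] (v : ι → ℝ) (i : ι) : |v i| ≤ √(∑ j, v j ^ 2) :=
  Real.abs_le_sqrt (single_le_sum (f := fun j => v j ^ 2) (fun _ _ => sq_nonneg _) (mem_univ i))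

lemma abs_le_mul_of_hasDerivWithinAt_Icc {f f' : ℝ → ℝ} {C T : ℝ} (hf0 : f 0 = 0)
    (hf : ∀ x ∈ Icc 0 T, HasDerivWithinAt f (f' x) (Icc 0 T) x)
    (hf' : ∀ x ∈ Ico 0 T, |f' x| ≤ C) : ∀ x ∈ Icc 0 T, |f x| ≤ C * x := by
  intro x hx
  simpa [hf0] using norm_image_sub_le_of_norm_deriv_le_segment' hf hf' x hx

variable {T : ℝ} {α r : ℝ → ι → ℝ} {R : ℝ → ℝ}

lemma normalizedFlow_abs_le [Fintype ι] (hα0 : ∀ i, α 0 i = 0)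
    (hR : ∀ t, R t = √(∑ j, r t j ^ 2)) (hRpos : ∀ t ∈ Icc 0 T, 0 < R t)
    (hode : ∀ t ∈ Icc 0 T, ∀ i, HasDerivWithinAt (fun s => α s i) (r t i / R t) (Icc 0 T) t) :
    ∀ x ∈ Icc 0 T, ∀ i, |α x i| ≤ x := by
  intro x hx i
  have hspeed : ∀ t ∈ Ico 0 T, |r t i / R t| ≤ 1 := by
    intro t ht
    have hRt := hRpos t (Ico_subset_Icc_self ht)
    rw [abs_div, abs_of_pos hRt, div_le_one hRt, hR]
    exact abs_le_sqrt_sum_sq (r t) i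
  simpa using abs_le_mul_of_hasDerivWithinAt_Icc (hα0 i) (fun t ht => hode t ht i) hspeed x hx

lemma normalizedFlow_nonneg (hα0 : ∀ i, α 0 i = 0) (hRpos : ∀ t ∈ Icc 0 T, 0 < R t)
    (hode : ∀ t ∈ Icc 0 T, ∀ i, HasDerivWithinAt (fun s => α s i) (r t i / R t) (Icc 0 T) t)
    (hr : ∀ t ∈ Icc 0 T, ∀ i, 0 ≤ r t i) : ∀ x ∈ Icc 0 T, ∀ i, 0 ≤ α x i := by
  intro x hx i
  have hmono : MonotoneOn (fun s => α s i) (Icc 0 T) := by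
    refine monotoneOn_of_hasDerivWithinAt_nonneg (convex_Icc 0 T)
      (fun t ht => (hode t ht i).continuousWithinAt)
      (fun t ht => (hode t (interior_subset ht) i).mono interior_subset) fun t ht => ?_
    have ht' := interior_subset ht
    exact div_nonneg (hr t ht' i) (hRpos t ht').le
  simpa [hα0] using hmono (left_mem_Icc.2 (hx.1.trans hx.2)) hx hx.1

lemma normalizedFlow_sum_le [Fintype ι] {A ρ : ℝ} (hα0 : ∀ i, α 0 i = 0) (hρ : 0 < ρ)
    (hρR : ∀ t ∈ Icc 0 T, ρ ≤ R t)
    (hode : ∀ t ∈ Icc 0 T, ∀ i, HasDerivWithinAt (fun s => α s i) (r t i / R t) (Icc 0 T) t)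
    (hr : ∀ t ∈ Icc 0 T, ∀ i, 0 ≤ r t i) (hA : ∀ t ∈ Icc 0 T, ∑ i, r t i ≤ A) :
    ∀ x ∈ Icc 0 T, ∑ i, α x i ≤ A / ρ * x := by
  intro x hx
  have hspeed : ∀ t ∈ Ico 0 T, |∑ i, r t i / R t| ≤ A / ρ := by
    intro t ht
    have ht' := Ico_subset_Icc_self ht
    have hsum : 0 ≤ ∑ i, r t i := sum_nonneg fun i _ => hr t ht' i
    rw [← sum_div, abs_of_nonneg (div_nonneg hsum (hρ.trans_le (hρR t ht')).le)]
    exact div_le_div₀ (hsum.trans (hA t ht')) (hA t ht') hρ (hρR t ht')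
  exact (le_abs_self _).trans (abs_le_mul_of_hasDerivWithinAt_Icc (by simp [hα0])
    (fun t ht => HasDerivWithinAt.fun_sum fun i _ => hode t ht i) hspeed x hx)

end NormalizedFlow

/-- The paper's `α_c`, the value at which `alphaSpec` saturates. -/
noncomputable def alphaOpt (μ σ pc : ℝ) : ℝ :=
  μ * pc / (μ ^ 2 * pc + σ ^ 2)

section AlphaOpt

variable {μ σ q pc : ℝ}

lemma alphaSpec_of_le_alphaOpt {t : ℝ} (ht : t ≤ alphaOpt μ σ pc) : alphaSpec μ σ pc t = t :=
  min_eq_left ht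

lemma alphaOpt_le_alphaOpt (hμ : 0 ≤ μ) (hσ : σ ≠ 0) (hq : 0 ≤ q) (hqp : q ≤ pc) :
    alphaOpt μ σ q ≤ alphaOpt μ σ pc := by
  have hσ2 : 0 < σ ^ 2 := by positivity
  unfold alphaOpt
  rw [div_le_div_iff₀ (by positivity) (by nlinarith)]
  nlinarith [mul_le_mul_of_nonneg_left hqp (mul_nonneg hμ hσ2.le)]

lemma residual_ge_of_le_alphaOpt {a : ℝ} (hσ : σ ≠ 0) (hq : 0 ≤ q) (hqp : q ≤ pc)
    (ha : a ≤ alphaOpt μ σ q) :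
    μ * (pc - q) / (q * (μ ^ 2 / σ ^ 2) + 1) ≤ μ * pc - (μ ^ 2 * pc + σ ^ 2) * a := by
  calc μ * (pc - q) / (q * (μ ^ 2 / σ ^ 2) + 1)
      = μ * pc - (μ ^ 2 * pc + σ ^ 2) * alphaOpt μ σ q := by
        unfold alphaOpt; field_simp; ring
    _ ≤ μ * pc - (μ ^ 2 * pc + σ ^ 2) * a := by
        gcongr
        nlinarith

end AlphaOpt

section NormalizedGradientFlow

variable {ι : Type*} [Fintype ι] {μ σ q T : ℝ} {p : ι → ℝ} {α r : ℝ → ι → ℝ} {R : ℝ → ℝ}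

lemma ngf_residual_ge (hσ : σ ≠ 0) (hq : 0 ≤ q) (hqp : ∀ i, q ≤ p i)
    (hT : T ≤ alphaOpt μ σ q) (hα0 : ∀ i, α 0 i = 0)
    (hr : ∀ t i, r t i = μ * p i - (μ ^ 2 * p i + σ ^ 2) * α t i)
    (hR : ∀ t, R t = √(∑ j, r t j ^ 2)) (hRpos : ∀ t ∈ Icc 0 T, 0 < R t)
    (hode : ∀ t ∈ Icc 0 T, ∀ i, HasDerivWithinAt (fun s => α s i) (r t i / R t) (Icc 0 T) t) :
    ∀ t ∈ Icc 0 T, ∀ i, μ * (p i - q) / (q * (μ ^ 2 / σ ^ 2) + 1) ≤ r t i := by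
  intro t ht i
  have hαt : α t i ≤ T :=
    (le_abs_self _).trans ((normalizedFlow_abs_le hα0 hR hRpos hode t ht i).trans ht.2)
  rw [hr]
  exact residual_ge_of_le_alphaOpt hσ hq (hqp i) (hαt.trans hT)

lemma ngf_sum_le (hμ : 0 < μ) (hσ : σ ≠ 0) (hq : 0 ≤ q) (hqp : ∀ i, q ≤ p i)
    (hsum : ∑ i, p i = 1) {M : ι} (hM : q < p M)
    (hT : T ≤ alphaOpt μ σ q) (hα0 : ∀ i, α 0 i = 0)
    (hr : ∀ t i, r t i = μ * p i - (μ ^ 2 * p i + σ ^ 2) * α t i)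
    (hR : ∀ t, R t = √(∑ j, r t j ^ 2)) (hRpos : ∀ t ∈ Icc 0 T, 0 < R t)
    (hode : ∀ t ∈ Icc 0 T, ∀ i, HasDerivWithinAt (fun s => α s i) (r t i / R t) (Icc 0 T) t) :
    ∀ x ∈ Icc 0 T, ∑ i, α x i ≤ (q * (μ ^ 2 / σ ^ 2) + 1) / (p M - q) * x := by
  have hres := ngf_residual_ge hσ hq hqp hT hα0 hr hR hRpos hode
  have hden : 0 < q * (μ ^ 2 / σ ^ 2) + 1 := by positivity
  have hr0 : ∀ t ∈ Icc 0 T, ∀ i, 0 ≤ r t i := fun t ht i =>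
    (div_nonneg (mul_nonneg hμ.le (sub_nonneg.2 (hqp i))) hden.le).trans (hres t ht i)
  have hα := normalizedFlow_nonneg hα0 hRpos hode hr0
  have hA : ∀ t ∈ Icc 0 T, ∑ i, r t i ≤ μ := by
    intro t ht
    calc ∑ i, r t i ≤ ∑ i, μ * p i := by
          gcongr with i
          have : 0 ≤ (μ ^ 2 * p i + σ ^ 2) * α t i :=
            mul_nonneg (by nlinarith [hqp i, sq_nonneg μ, sq_nonneg σ]) (hα t ht i)
          linarith [hr t i]
      _ = μ := by rw [← mul_sum, hsum, mul_one]
  have hρ : 0 < μ * (p M - q) / (q * (μ ^ 2 / σ ^ 2) + 1) :=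
    div_pos (mul_pos hμ (sub_pos.2 hM)) hden
  have hρR : ∀ t ∈ Icc 0 T, μ * (p M - q) / (q * (μ ^ 2 / σ ^ 2) + 1) ≤ R t := fun t ht =>
    (hres t ht M).trans ((le_abs_self _).trans (hR t ▸ abs_le_sqrt_sum_sq (r t) M))
  intro x hx
  convert normalizedFlow_sum_le hα0 hρ hρR hode hr0 hA x hx using 2
  field_simp

end NormalizedGradientFlow

section Loss

variable {k : ℕ} {μ σ t : ℝ}

lemma classLoss_ge (α : Fin k → ℝ → ℝ) (c : Fin k) : 1 / 2 - μ * α c t ≤ classLoss μ σ α c t := by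
  have : 0 ≤ σ ^ 2 * ∑ j, α j t ^ 2 := by positivity
  unfold classLoss
  nlinarith [sq_nonneg (μ * α c t)]

lemma balancedLoss_ge (hk : k ≠ 0) (α : Fin k → ℝ → ℝ) :
    1 / 2 - μ * (∑ c, α c t) / k ≤ balancedLoss μ σ α t := by
  have hk' : (0 : ℝ) < k := by positivity
  calc 1 / 2 - μ * (∑ c, α c t) / k = 1 / (k : ℝ) * ∑ c : Fin k, (1 / 2 - μ * α c t) := by
        rw [sum_sub_distrib, ← mul_sum, sum_const, card_univ, Fintype.card_fin, nsmul_eq_mul]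
        field_simp
    _ ≤ balancedLoss μ σ α t := by
        unfold balancedLoss
        gcongr with c
        exact classLoss_ge α c

lemma balancedLoss_alphaSpec (hk : k ≠ 0) {p : Fin k → ℝ} (ht : ∀ c, t ≤ alphaOpt μ σ (p c)) :
    balancedLoss μ σ (fun c => alphaSpec μ σ (p c)) t
      = 1 / 2 * (1 - μ * t) ^ 2 + 1 / 2 * σ ^ 2 * (k * t ^ 2) := by
  simp only [balancedLoss, classLoss, alphaSpec_of_le_alphaOpt (ht _), sum_const, card_univ,
    Fintype.card_fin, nsmul_eq_mul]
  field_simp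

end Loss

section PriorGap

variable {k s q D : ℝ}

lemma one_sub_mul_pos_of_lt_one_div (hk : 0 < k) (hs : 0 ≤ s) (hpm : q < 1 / (s + 2 * k)) :
    0 < 1 - q * (s + 2 * k) := by
  have := (lt_div_iff₀ (by positivity : 0 < s + 2 * k)).1 hpm
  linarith

lemma prior_gap_pos (hk : 0 < k) (hs : 0 ≤ s) (hq : 0 ≤ q) (hpm : q < 1 / (s + 2 * k))
    (hgap : D ≥ 2 * (q * s + 1) ^ 2 / (k * (1 - q * (s + 2 * k)))) : 0 < D := by
  have hw := one_sub_mul_pos_of_lt_one_div hk hs hpm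
  have hu : 0 < q * s + 1 := by nlinarith [mul_nonneg hq hs]
  exact lt_of_lt_of_le (div_pos (mul_pos two_pos (pow_pos hu 2)) (mul_pos hk hw)) hgap

lemma prior_gap_bound (hk : 0 < k) (hs : 0 ≤ s) (hq : 0 ≤ q) (hpm : q < 1 / (s + 2 * k))
    (hgap : D ≥ 2 * (q * s + 1) ^ 2 / (k * (1 - q * (s + 2 * k)))) :
    2 * (q * s + 1) / (k * D) + (s + k) * q / (q * s + 1) ≤ 1 := by
  have hw := one_sub_mul_pos_of_lt_one_div hk hs hpm
  have hD := prior_gap_pos hk hs hq hpm hgap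
  have hu : 0 < q * s + 1 := by nlinarith [mul_nonneg hq hs]
  have hgap' : 2 * (q * s + 1) / (k * D) ≤ (1 - q * (s + 2 * k)) / (q * s + 1) := by
    rw [ge_iff_le, div_le_iff₀ (by positivity)] at hgap
    rw [div_le_div_iff₀ (by positivity) hu]
    nlinarith
  calc 2 * (q * s + 1) / (k * D) + (s + k) * q / (q * s + 1)
      ≤ (1 - q * (s + 2 * k)) / (q * s + 1) + (s + k) * q / (q * s + 1) := by gcongr
    _ = (1 - k * q) / (q * s + 1) := by rw [← add_div]; ring_nf
    _ ≤ 1 := by rw [div_le_one hu]; nlinarith [mul_nonneg hq hs, mul_nonneg hk.le hq]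

end PriorGap

lemma loss_gap_of_sum_le {k μ σ q D S t : ℝ} (hk : 0 < k) (hμ : 0 < μ) (hσ : σ ≠ 0)
    (ht : 0 ≤ t) (htq : t ≤ alphaOpt μ σ q)
    (hS : S ≤ (q * (μ ^ 2 / σ ^ 2) + 1) / D * t)
    (hgap : 2 * (q * (μ ^ 2 / σ ^ 2) + 1) / (k * D)
      + (μ ^ 2 / σ ^ 2 + k) * q / (q * (μ ^ 2 / σ ^ 2) + 1) ≤ 1) :
    μ * t / 2 ≤ 1 / 2 - μ * S / k - (1 / 2 * (1 - μ * t) ^ 2 + 1 / 2 * σ ^ 2 * (k * t ^ 2)) := by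
  have hdrift : μ * S / k ≤ μ * t / 2 * (2 * (q * (μ ^ 2 / σ ^ 2) + 1) / (k * D)) := by
    calc μ * S / k ≤ μ * ((q * (μ ^ 2 / σ ^ 2) + 1) / D * t) / k := by gcongr
      _ = _ := by field_simp
  have hspeed : (μ ^ 2 + k * σ ^ 2) * t
      ≤ μ * ((μ ^ 2 / σ ^ 2 + k) * q / (q * (μ ^ 2 / σ ^ 2) + 1)) := by
    calc (μ ^ 2 + k * σ ^ 2) * t ≤ (μ ^ 2 + k * σ ^ 2) * alphaOpt μ σ q := by gcongr
      _ = _ := by unfold alphaOpt; field_simp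
  have hquad := mul_le_mul_of_nonneg_left hspeed (by positivity : 0 ≤ t / 2)
  have htotal := mul_le_mul_of_nonneg_left hgap (by positivity : 0 ≤ μ * t / 2)
  nlinarith

theorem stmt9_general (k : ℕ) (μ σ : ℝ) (hμ : 0 < μ) (hσ : 0 < σ)
    (p : Fin k → ℝ) (hp : ∀ c, 0 < p c) (hsum : ∑ c, p c = 1)
    (m M : Fin k) (hm : ∀ c, p m ≤ p c)
    (snr : ℝ) (hsnr : snr = μ ^ 2 / σ ^ 2)
    (tstar : ℝ) (htstar : tstar = μ * p m / (μ ^ 2 * p m + σ ^ 2))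
    (α : ℝ → Fin k → ℝ) (hα0 : ∀ i, α 0 i = 0)
    (r : ℝ → Fin k → ℝ)
    (hr : ∀ t i, r t i = μ * p i - (μ ^ 2 * p i + σ ^ 2) * α t i)
    (R : ℝ → ℝ) (hR : ∀ t, R t = Real.sqrt (∑ j, (r t j) ^ 2))
    (hRpos : ∀ t ∈ Set.Icc (0 : ℝ) tstar, 0 < R t)
    (hode : ∀ t ∈ Set.Icc (0 : ℝ) tstar, ∀ i,
      HasDerivWithinAt (fun s => α s i) (r t i / R t) (Set.Icc (0 : ℝ) tstar) t)
    (hpm : p m < 1 / (snr + 2 * k))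
    (hgap : p M - p m ≥ 2 * (p m * snr + 1) ^ 2 / (k * (1 - p m * (snr + 2 * k)))) :
    ∀ t : ℝ, 0 < t → t ≤ tstar →
      balancedLoss μ σ (fun c s => α s c) t
          - balancedLoss μ σ (fun c => alphaSpec μ σ (p c)) t ≥ μ * t / 2 := by
  intro t ht htT
  subst hsnr
  have hk : (0 : ℝ) < k := Nat.cast_pos.2 m.pos
  have hq : 0 ≤ p m := (hp m).le
  have hs : 0 ≤ μ ^ 2 / σ ^ 2 := by positivity
  have hT : tstar ≤ alphaOpt μ σ (p m) := htstar.le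
  have hS := ngf_sum_le hμ hσ.ne' hq hm hsum (sub_pos.1 (prior_gap_pos hk hs hq hpm hgap)) hT
    hα0 hr hR hRpos hode t ⟨ht.le, htT⟩
  have hngf := balancedLoss_ge (μ := μ) (σ := σ) (t := t) m.pos.ne' (fun c s => α s c)
  have hspec := balancedLoss_alphaSpec (p := p) m.pos.ne'
    fun c => htT.trans (hT.trans (alphaOpt_le_alphaOpt hμ.le hσ.ne' hq (hm c)))
  have hloss := loss_gap_of_sum_le hk hμ hσ.ne' ht.le (htT.trans hT) hS
    (prior_gap_bound hk hs hq hpm hgap)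
  rw [hspec]
  linarith

/-- balanced-loss part of Theorem 2, full version. Comparison of
normalized gradient flow (NGF) with spectral gradient flow: if `α^{NGF}` is a differentiable
trajectory on `[0, t*]` starting at `0` that solves the NGF ODE
`α_i′ = r_i/R` with `r_i(t) = μ p_i − (μ² p_i + σ²) α_i(t)` and `R = sqrt(Σ_j r_j²) > 0`,
and the stated hypotheses on `p_m`, `p_M` hold, then for every `t ∈ (0, t*]` the balanced
loss of NGF exceeds that of SpecGF by at least `μ t / 2`. -/
theorem stmt9 (k : ℕ) (hk : 2 ≤ k) (μ σ : ℝ) (hμ : 0 < μ) (hσ : 0 < σ)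
    (p : Fin k → ℝ) (hp : ∀ c, 0 < p c) (hsum : ∑ c, p c = 1)
    (m M : Fin k) (hm : ∀ c, p m ≤ p c) (hM : ∀ c, p c ≤ p M)
    (snr : ℝ) (hsnr : snr = μ ^ 2 / σ ^ 2)
    (tstar : ℝ) (htstar : tstar = μ * p m / (μ ^ 2 * p m + σ ^ 2))
    (α : ℝ → Fin k → ℝ) (hα0 : ∀ i, α 0 i = 0)
    (r : ℝ → Fin k → ℝ)
    (hr : ∀ t i, r t i = μ * p i - (μ ^ 2 * p i + σ ^ 2) * α t i)
    (R : ℝ → ℝ) (hR : ∀ t, R t = Real.sqrt (∑ j, (r t j) ^ 2))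
    (hRpos : ∀ t ∈ Set.Icc (0 : ℝ) tstar, 0 < R t)
    (hode : ∀ t ∈ Set.Icc (0 : ℝ) tstar, ∀ i,
      HasDerivWithinAt (fun s => α s i) (r t i / R t) (Set.Icc (0 : ℝ) tstar) t)
    (hpm : p m < 1 / (snr + 2 * k))
    (hgap : p M - p m ≥ 2 * (p m * snr + 1) ^ 2 / (k * (1 - p m * (snr + 2 * k)))) :
    ∀ t : ℝ, 0 < t → t ≤ tstar →
      balancedLoss μ σ (fun c s => α s c) t
          - balancedLoss μ σ (fun c => alphaSpec μ σ (p c)) t ≥ μ * t / 2 :=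
  stmt9_general k μ σ hμ hσ p hp hsum m M hm snr hsnr tstar htstar α hα0 r hr R hR hRpos hode hpm
    hgap
end

section
/- Let a, b, η > 0 and let w_0 be a real number with 0 < w_0 ≤ sqrt(b/a). Define the sequence w_{t+1} = w_t + η·1{a w_t² < b} for t = 0, 1, 2, …. Then for every t ≥ 0, w_t = w_0 + η · min(t, ⌈(sqrt(b/a) − w_0)/η⌉). In particular, w_t grows linearly at rate η until it first reaches or exceeds sqrt(b/a) and is constant thereafter. -/
/-!
For `x ≥ 0` and `a > 0` the test `a * x ^ 2 < b` is the threshold test `x < √(b / a)`, and the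
iterates never decrease, so they stay positive and the recursion is a capped walk
`w_{t+1} = w_t + η · 1{w_t < S}`. Such a walk sits at `w_0 + η t` exactly as long as
`w_0 + η t < S`, i.e. as long as `t < ⌈(S - w_0) / η⌉`, and then stops moving.
-/

theorem Int.lt_ceil_div_iff_add_mul_lt {η : ℝ} (hη : 0 < η) (w₀ S : ℝ) (n : ℤ) :
    n < ⌈(S - w₀) / η⌉ ↔ w₀ + η * n < S := by
  rw [Int.lt_ceil, lt_div_iff₀ hη, mul_comm, lt_sub_iff_add_lt']

theorem mul_sq_lt_iff_lt_sqrt_div {a b x : ℝ} (ha : 0 < a) (hx : 0 ≤ x) :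
    a * x ^ 2 < b ↔ x < √(b / a) := by
  rw [Real.lt_sqrt hx, lt_div_iff₀ ha, mul_comm]

theorem eq_add_mul_min_ceil_of_capped_step {η w₀ S : ℝ} (hη : 0 < η) (hw₀ : w₀ ≤ S)
    {w : ℕ → ℝ} (h0 : w 0 = w₀) (hrec : ∀ t, w (t + 1) = w t + η * if w t < S then 1 else 0)
    (t : ℕ) : w t = w₀ + η * min (t : ℝ) ((⌈(S - w₀) / η⌉ : ℤ) : ℝ) := by
  set N := ⌈(S - w₀) / η⌉
  have hN : 0 ≤ N := Int.ceil_nonneg (div_nonneg (sub_nonneg.2 hw₀) hη.le)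
  suffices w t = w₀ + η * ((min (t : ℤ) N : ℤ) : ℝ) by simpa using this
  induction t with
  | zero => simp [h0, hN]
  | succ t ih =>
    rw [hrec, ih]
    rcases lt_or_ge (t : ℤ) N with hlt | hge
    · have hmin : min (t : ℤ) N = t := min_eq_left hlt.le
      have hmin_succ : min ((t + 1 : ℕ) : ℤ) N = t + 1 := by omega
      have hstep : w₀ + η * ((t : ℤ) : ℝ) < S := (Int.lt_ceil_div_iff_add_mul_lt hη w₀ S t).1 hlt
      rw [hmin, hmin_succ, if_pos hstep]
      push_cast
      ring
    · have hmin : min (t : ℤ) N = N := min_eq_right hge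
      have hmin_succ : min ((t + 1 : ℕ) : ℤ) N = N := by omega
      have hstop : ¬ w₀ + η * (N : ℝ) < S :=
        (Int.lt_ceil_div_iff_add_mul_lt hη w₀ S N).not.1 (lt_irrefl N)
      rw [hmin, hmin_succ, if_neg hstop, mul_zero, add_zero]

theorem stmt10_general (a b η w0 : ℝ) (ha : 0 < a) (hη : 0 < η)
    (hw0 : 0 < w0) (hw0' : w0 ≤ Real.sqrt (b / a))
    (w : ℕ → ℝ) (h0 : w 0 = w0)
    (hrec : ∀ t : ℕ, w (t + 1) = w t + η * (if a * w t ^ 2 < b then 1 else 0)) :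
    ∀ t : ℕ,
      w t = w0 + η * min (t : ℝ) ((⌈(Real.sqrt (b / a) - w0) / η⌉ : ℤ) : ℝ) := by
  have hmono : Monotone w := monotone_nat_of_le_succ fun t => by
    rw [hrec t]
    split_ifs <;> linarith
  have hnonneg (t : ℕ) : 0 ≤ w t := hw0.le.trans (h0 ▸ hmono t.zero_le)
  refine eq_add_mul_min_ceil_of_capped_step hη hw0' h0 fun t => ?_
  rw [hrec t, if_congr (mul_sq_lt_iff_lt_sqrt_div ha (hnonneg t)) rfl rfl]

/-- Per-component evolution of Spectral Gradient Descent for the bilinear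
model (Proposition 2): for the recursion `w_{t+1} = w_t + η·1{a w_t² < b}` started at
`w_0 ∈ (0, sqrt(b/a)]`, one has `w_t = w_0 + η · min(t, ⌈(sqrt(b/a) − w_0)/η⌉)` for all `t`;
in particular `w_t` grows linearly at rate `η` until it first reaches or exceeds `sqrt(b/a)`
and is constant thereafter. -/
theorem stmt10 (a b η w0 : ℝ) (ha : 0 < a) (hb : 0 < b) (hη : 0 < η)
    (hw0 : 0 < w0) (hw0' : w0 ≤ Real.sqrt (b / a))
    (w : ℕ → ℝ) (h0 : w 0 = w0)
    (hrec : ∀ t : ℕ, w (t + 1) = w t + η * (if a * w t ^ 2 < b then 1 else 0)) :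
    ∀ t : ℕ,
      w t = w0 + η * min (t : ℝ) ((⌈(Real.sqrt (b / a) - w0) / η⌉ : ℤ) : ℝ) :=
  stmt10_general a b η w0 ha hη hw0 hw0' w h0 hrec
end

section
/- Let a, b, η > 0, let L ≥ 1 be an integer, and let w_0 be a real number with 0 < w_0 ≤ (b/a)^{1/L}. Define the sequence w_{t+1} = w_t + η·1{a w_t^L < b} for t = 0, 1, 2, …. Then for every t ≥ 0, w_t = w_0 + η · min(t, ⌈((b/a)^{1/L} − w_0)/η⌉). Consequently, the relative gap between the saturation times of two components with ratios b_1/a_1 ≥ b_k/a_k (taking w_0 → 0) is ((b_1/a_1)/(b_k/a_k))^{1/L} − 1, which is decreasing in the depth L. -/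
/-!
Below the threshold `W = (b/a)^(1/L)` the condition `a w^L < b` is exactly `w < W` (on `w ≥ 0`),
so the iterates climb in steps of `η` from `w₀` until they first reach `W`, which happens after
`⌈(W - w₀)/η⌉` steps, and stay there forever. The remaining two claims are the identity
`(r₁^p - r₂^p)/r₂^p = (r₁/r₂)^p - 1` and the antitonicity of `L ↦ q^(1/L)` for `q ≥ 1`.
-/

theorem mul_pow_lt_iff_lt_rpow_one_div {a b x : ℝ} {L : ℕ} (hL : L ≠ 0) (ha : 0 < a)
    (hb : 0 ≤ b) (hx : 0 ≤ x) : a * x ^ L < b ↔ x < (b / a) ^ (1 / (L : ℝ)) := by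
  rw [one_div, Real.lt_rpow_inv_iff_of_pos hx (div_nonneg hb ha.le) (by positivity),
    Real.rpow_natCast, lt_div_iff₀ ha, mul_comm]

theorem eq_add_mul_min_ceil_of_increment_while_lt {p : ℝ → Prop} [DecidablePred p]
    {w : ℕ → ℝ} {w0 W η : ℝ} (hη : 0 < η) (hW : w0 ≤ W) (hp : ∀ x, w0 ≤ x → (p x ↔ x < W))
    (h0 : w 0 = w0) (hrec : ∀ t, w (t + 1) = w t + η * if p (w t) then 1 else 0) (t : ℕ) :
    w t = w0 + η * min (t : ℝ) ((⌈(W - w0) / η⌉ : ℤ) : ℝ) := by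
  set N := ⌈(W - w0) / η⌉
  have hN : (0 : ℝ) ≤ N := by exact_mod_cast Int.ceil_nonneg (div_nonneg (sub_nonneg.2 hW) hη.le)
  have below_iff (s : ℕ) : w0 + η * s < W ↔ (s : ℤ) < N := by
    rw [Int.lt_ceil, lt_div_iff₀ hη]
    push_cast
    constructor <;> intro <;> linarith
  induction t with
  | zero => simp [h0, hN]
  | succ t ih =>
    rw [hrec, ih]
    push_cast
    by_cases htN : (t : ℤ) < N
    · have hstep : (t : ℝ) + 1 ≤ N := by exact_mod_cast Int.add_one_le_of_lt htN
      have hmin : min (t : ℝ) N = t := min_eq_left (by linarith)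
      rw [hmin, min_eq_left hstep,
        if_pos ((hp _ (by nlinarith [t.cast_nonneg (α := ℝ)])).2 ((below_iff t).2 htN))]
      ring
    · have hNt : (N : ℝ) ≤ t := by exact_mod_cast not_lt.1 htN
      have hreached : W ≤ w0 + η * N := by
        have := (div_le_iff₀' hη).1 (Int.le_ceil ((W - w0) / η))
        linarith
      rw [min_eq_right hNt, min_eq_right (by linarith),
        if_neg (fun h => (not_lt.2 hreached) ((hp _ (by nlinarith)).1 h))]
      ring

theorem rpow_sub_rpow_div_rpow {r1 r2 : ℝ} (h1 : 0 ≤ r1) (h2 : 0 < r2) (p : ℝ) :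
    (r1 ^ p - r2 ^ p) / r2 ^ p = (r1 / r2) ^ p - 1 := by
  have : 0 < r2 ^ p := Real.rpow_pos_of_pos h2 p
  rw [Real.div_rpow h1 h2.le]
  field_simp

theorem rpow_one_div_natCast_le_of_le {q : ℝ} (hq : 1 ≤ q) {m n : ℕ} (hm : 1 ≤ m)
    (hmn : m ≤ n) : q ^ (1 / (n : ℝ)) ≤ q ^ (1 / (m : ℝ)) :=
  Real.rpow_le_rpow_of_exponent_le hq <|
    one_div_le_one_div_of_le (by exact_mod_cast hm) (by exact_mod_cast hmn)

/-- Per-component evolution of Spectral Gradient Descent for the depth-`L`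
deep linear model (Proposition B.3): for the recursion `w_{t+1} = w_t + η·1{a w_t^L < b}`
started at `w_0 ∈ (0, (b/a)^{1/L}]`, one has
`w_t = w_0 + η · min(t, ⌈((b/a)^{1/L} − w_0)/η⌉)` for all `t`.
Consequently (taking `w_0 → 0`), the relative gap between the saturation values/times of two
components with ratios `r1 ≥ r2 > 0` equals `(r1/r2)^{1/L} − 1`, which is decreasing in the
depth `L`. -/
theorem stmt11 (a b η w0 : ℝ) (L : ℕ) (hL : 1 ≤ L)
    (ha : 0 < a) (hb : 0 < b) (hη : 0 < η)
    (hw0 : 0 < w0) (hw0' : w0 ≤ (b / a) ^ (1 / (L : ℝ)))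
    (w : ℕ → ℝ) (h0 : w 0 = w0)
    (hrec : ∀ t : ℕ, w (t + 1) = w t + η * (if a * w t ^ L < b then 1 else 0)) :
    (∀ t : ℕ,
      w t = w0 + η * min (t : ℝ) ((⌈((b / a) ^ (1 / (L : ℝ)) - w0) / η⌉ : ℤ) : ℝ)) ∧
    (∀ r1 r2 : ℝ, 0 < r2 → r2 ≤ r1 →
      (r1 ^ (1 / (L : ℝ)) - r2 ^ (1 / (L : ℝ))) / r2 ^ (1 / (L : ℝ))
        = (r1 / r2) ^ (1 / (L : ℝ)) - 1) ∧
    (∀ r1 r2 : ℝ, 0 < r2 → r2 ≤ r1 → ∀ L1 L2 : ℕ, 1 ≤ L1 → L1 ≤ L2 →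
      (r1 / r2) ^ (1 / (L2 : ℝ)) - 1 ≤ (r1 / r2) ^ (1 / (L1 : ℝ)) - 1) := by
  refine ⟨eq_add_mul_min_ceil_of_increment_while_lt (p := fun x => a * x ^ L < b) hη hw0'
      (fun x hx => ?_) h0 hrec,
    fun r1 r2 h2 h12 => rpow_sub_rpow_div_rpow (h2.le.trans h12) h2 _,
    fun r1 r2 h2 h12 L1 L2 hL1 hL12 => ?_⟩
  · exact mul_pow_lt_iff_lt_rpow_one_div (by omega) ha hb.le (hw0.le.trans hx)
  · exact sub_le_sub_right (rpow_one_div_natCast_le_of_le ((one_le_div h2).2 h12) hL1 hL12) 1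
end

section
/- Fix k ≥ 1, μ > 0, σ > 0, p_1, …, p_k > 0, and T > 0. Let α : [0, T] → ℝ^k be a differentiable function with α(0) = 0 satisfying, for all t ∈ [0, T] and all i, α_i′(t) = r_i(t)/R(t), where r_i(t) = μ p_i − (μ² p_i + σ²) α_i(t) and R(t) = sqrt(Σ_{j=1}^k r_j(t)²) > 0. Then for all t ∈ [0, T] and all i: 0 ≤ r_i(t) ≤ μ p_i, 0 ≤ α_i′(t) ≤ 1, and 0 ≤ α_i(t) ≤ min(t, μ p_i/(μ² p_i + σ²)). -/
/-!
Each residual solves the linear equation `r_i' = -(c_i / R) r_i` with `c_i = μ² p_i + σ²`, and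
`c_i / R` is nonnegative and bounded since `R` is continuous and positive on `[0, T]`. Hence
`r_i²` is nonincreasing while `r_i² e^{Kt}` is nondecreasing for large `K`, so `r_i` never
vanishes and stays in `(0, μ p_i]`. Then `0 ≤ r_i ≤ R` gives `0 ≤ α_i' ≤ 1`, whence `α_i ≤ t`,
and the remaining bounds on `α_i` are read off from `r_i = μ p_i - c_i α_i`.
-/

open Set Real

theorem monotoneOn_mul_exp_of_hasDerivWithinAt {f f' : ℝ → ℝ} {a b K : ℝ}
    (hf : ∀ x ∈ Icc a b, HasDerivWithinAt f (f' x) (Icc a b) x)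
    (hf' : ∀ x ∈ Icc a b, -(K * f x) ≤ f' x) :
    MonotoneOn (fun x => f x * exp (K * x)) (Icc a b) := by
  have hexp : ∀ x, HasDerivAt (fun x => exp (K * x)) (exp (K * x) * K) x := fun x => by
    simpa using ((hasDerivAt_id x).const_mul K).exp
  refine monotoneOn_of_hasDerivWithinAt_nonneg (convex_Icc a b)
    (fun x hx => ((hf x hx).mul (hexp x).hasDerivWithinAt).continuousWithinAt)
    (fun x hx => ((hf x (interior_subset hx)).mul (hexp x).hasDerivWithinAt).mono interior_subset)
    fun x hx => ?_
  have := hf' x (interior_subset hx)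
  have : 0 ≤ (f' x + K * f x) * exp (K * x) := mul_nonneg (by linarith) (exp_pos _).le
  linarith

theorem image_sub_le_mul_sub_of_hasDerivWithinAt_le {f f' : ℝ → ℝ} {a b C : ℝ}
    (hf : ∀ x ∈ Icc a b, HasDerivWithinAt f (f' x) (Icc a b) x)
    (hC : ∀ x ∈ Icc a b, f' x ≤ C) {x : ℝ} (hx : x ∈ Icc a b) :
    f x - f a ≤ C * (x - a) := by
  have hg : ∀ y ∈ Icc a b, HasDerivWithinAt (fun y => C * y - f y) (C - f' y) (Icc a b) y :=
    fun y hy => ((hasDerivWithinAt_id y _).const_mul C).fun_sub (hf y hy) |>.congr_deriv (by simp)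
  have hmono : MonotoneOn (fun y => C * y - f y) (Icc a b) :=
    monotoneOn_of_hasDerivWithinAt_nonneg (convex_Icc a b)
      (fun y hy => (hg y hy).continuousWithinAt)
      (fun y hy => (hg y (interior_subset hy)).mono interior_subset)
      fun y hy => sub_nonneg.2 (hC y (interior_subset hy))
  have := hmono (left_mem_Icc.2 (hx.1.trans hx.2)) hx hx.1
  simp only at this
  linarith

theorem pos_of_ne_zero_of_continuousOn_Icc {f : ℝ → ℝ} {a b : ℝ}
    (hf : ContinuousOn f (Icc a b)) (ha : 0 < f a) (hne : ∀ x ∈ Icc a b, f x ≠ 0) :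
    ∀ x ∈ Icc a b, 0 < f x := by
  intro x hx
  by_contra! hx0
  obtain ⟨y, hy, hy0⟩ := isPreconnected_Icc.intermediate_value hx
    (left_mem_Icc.2 (hx.1.trans hx.2)) hf ⟨hx0, ha.le⟩
  exact hne y hy hy0

theorem pos_and_le_of_hasDerivWithinAt_neg_mul {f h : ℝ → ℝ} {a b K : ℝ}
    (hf : ∀ x ∈ Icc a b, HasDerivWithinAt f (-(h x * f x)) (Icc a b) x)
    (hh : ∀ x ∈ Icc a b, 0 ≤ h x ∧ h x ≤ K) (ha : 0 < f a) :
    ∀ x ∈ Icc a b, 0 < f x ∧ f x ≤ f a := by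
  have hsq : ∀ x ∈ Icc a b,
      HasDerivWithinAt (fun x => f x ^ 2) (-(2 * h x * f x ^ 2)) (Icc a b) x := fun x hx =>
    ((hf x hx).pow 2).congr_deriv (by ring)
  have hanti : AntitoneOn (fun x => f x ^ 2) (Icc a b) :=
    antitoneOn_of_hasDerivWithinAt_nonpos (convex_Icc a b)
      (fun x hx => (hsq x hx).continuousWithinAt)
      (fun x hx => (hsq x (interior_subset hx)).mono interior_subset)
      fun x hx => by have := (hh x (interior_subset hx)).1; simp only [neg_nonpos]; positivity
  have hgrowth : MonotoneOn (fun x => f x ^ 2 * exp (2 * K * x)) (Icc a b) :=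
    monotoneOn_mul_exp_of_hasDerivWithinAt hsq fun x hx => by
      have := (hh x hx).2
      have := sq_nonneg (f x)
      nlinarith
  intro x hx
  have ha_mem : a ∈ Icc a b := left_mem_Icc.2 (hx.1.trans hx.2)
  have hne : ∀ y ∈ Icc a b, f y ≠ 0 := by
    intro y hy hy0
    have := hgrowth ha_mem hy hy.1
    simp only [hy0] at this
    have : 0 < f a ^ 2 * exp (2 * K * a) := by positivity
    linarith
  have hpos := pos_of_ne_zero_of_continuousOn_Icc (fun x hx => (hf x hx).continuousWithinAt) ha hne
  exact ⟨hpos x hx, (pow_le_pow_iff_left₀ (hpos x hx).le ha.le two_ne_zero).1 (hanti ha_mem hx hx.1)⟩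

theorem stmt13_general (k : ℕ) (μ σ : ℝ) (hμ : 0 < μ)
    (p : Fin k → ℝ) (hp : ∀ c, 0 < p c)
    (T : ℝ)
    (α : ℝ → Fin k → ℝ) (hα0 : ∀ i, α 0 i = 0)
    (r : ℝ → Fin k → ℝ)
    (hr : ∀ t i, r t i = μ * p i - (μ ^ 2 * p i + σ ^ 2) * α t i)
    (R : ℝ → ℝ) (hR : ∀ t, R t = Real.sqrt (∑ j, (r t j) ^ 2))
    (hRpos : ∀ t ∈ Set.Icc (0 : ℝ) T, 0 < R t)
    (hode : ∀ t ∈ Set.Icc (0 : ℝ) T, ∀ i,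
      HasDerivWithinAt (fun s => α s i) (r t i / R t) (Set.Icc (0 : ℝ) T) t) :
    ∀ t ∈ Set.Icc (0 : ℝ) T, ∀ i : Fin k,
      0 ≤ r t i ∧ r t i ≤ μ * p i ∧
      0 ≤ r t i / R t ∧ r t i / R t ≤ 1 ∧
      0 ≤ α t i ∧ α t i ≤ min t (μ * p i / (μ ^ 2 * p i + σ ^ 2)) := by
  intro t ht i
  have hc : ∀ j, 0 < μ ^ 2 * p j + σ ^ 2 := fun j => by have := hp j; positivity
  have hr0 : ∀ j, r 0 j = μ * p j := fun j => by rw [hr, hα0, mul_zero, sub_zero]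
  have hr' : ∀ s ∈ Icc 0 T, ∀ j, HasDerivWithinAt (fun s => r s j)
      (-((μ ^ 2 * p j + σ ^ 2) / R s * r s j)) (Icc 0 T) s := fun s hs j => by
    rw [show (fun s => r s j) = _ from funext (hr · j)]
    exact (((hode s hs j).const_mul _).const_sub _).congr_deriv (by ring)
  have hRcont : ContinuousOn R (Icc 0 T) := by
    rw [show R = _ from funext hR]
    have hrcont : ∀ j, ContinuousOn (fun s => r s j) (Icc 0 T) :=
      fun j s hs => (hr' s hs j).continuousWithinAt
    exact (continuousOn_finsetSum _ fun j _ => (hrcont j).pow 2).sqrt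
  obtain ⟨t₀, ht₀, hmin⟩ := isCompact_Icc.exists_isMinOn ⟨t, ht⟩ hRcont
  -- `r j` solves `r' = -(c / R) r`, and `c / R ≤ c / R t₀` by minimality of `R t₀`.
  have hrbounds : ∀ s ∈ Icc 0 T, ∀ j, 0 < r s j ∧ r s j ≤ μ * p j := fun s hs j => by
    rw [← hr0 j]
    refine pos_and_le_of_hasDerivWithinAt_neg_mul (K := (μ ^ 2 * p j + σ ^ 2) / R t₀)
      (fun s hs => hr' s hs j) (fun s hs => ⟨(div_pos (hc j) (hRpos s hs)).le, ?_⟩)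
      (by rw [hr0]; exact mul_pos hμ (hp j)) s hs
    exact div_le_div_of_nonneg_left (hc j).le (hRpos t₀ ht₀) (hmin hs)
  have hratio : ∀ s ∈ Icc 0 T, ∀ j, 0 ≤ r s j / R s ∧ r s j / R s ≤ 1 := fun s hs j => by
    refine ⟨div_nonneg (hrbounds s hs j).1.le (hRpos s hs).le, (div_le_one (hRpos s hs)).2 ?_⟩
    rw [hR]
    exact (le_abs_self _).trans (Real.abs_le_sqrt
      (Finset.single_le_sum (fun j _ => sq_nonneg (r s j)) (Finset.mem_univ j)))
  have hαt : α t i ≤ t := by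
    simpa [hα0] using image_sub_le_mul_sub_of_hasDerivWithinAt_le (C := 1)
      (fun s hs => hode s hs i) (fun s hs => (hratio s hs i).2) ht
  have hα : α t i = (μ * p i - r t i) / (μ ^ 2 * p i + σ ^ 2) := by
    rw [hr]; field_simp [(hc i).ne']; ring
  obtain ⟨hrt_pos, hrt_le⟩ := hrbounds t ht i
  refine ⟨hrt_pos.le, hrt_le, (hratio t ht i).1, (hratio t ht i).2, ?_, le_min hαt ?_⟩ <;> rw [hα]
  · exact div_nonneg (by linarith) (hc i).le
  · exact div_le_div_of_nonneg_right (by linarith) (hc i).le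

/-- A priori bounds on the normalized gradient flow (NGF) trajectory:
if `α : [0, T] → ℝ^k` is differentiable with `α(0) = 0` and solves
`α_i′(t) = r_i(t)/R(t)` where `r_i(t) = μ p_i − (μ² p_i + σ²) α_i(t)` and
`R(t) = sqrt(Σ_j r_j(t)²) > 0`, then for all `t ∈ [0, T]` and all `i`:
`0 ≤ r_i(t) ≤ μ p_i`, `0 ≤ α_i′(t) ≤ 1`, and `0 ≤ α_i(t) ≤ min(t, μ p_i/(μ² p_i + σ²))`. -/
theorem stmt13 (k : ℕ) (hk : 1 ≤ k) (μ σ : ℝ) (hμ : 0 < μ) (hσ : 0 < σ)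
    (p : Fin k → ℝ) (hp : ∀ c, 0 < p c)
    (T : ℝ) (hT : 0 < T)
    (α : ℝ → Fin k → ℝ) (hα0 : ∀ i, α 0 i = 0)
    (r : ℝ → Fin k → ℝ)
    (hr : ∀ t i, r t i = μ * p i - (μ ^ 2 * p i + σ ^ 2) * α t i)
    (R : ℝ → ℝ) (hR : ∀ t, R t = Real.sqrt (∑ j, (r t j) ^ 2))
    (hRpos : ∀ t ∈ Set.Icc (0 : ℝ) T, 0 < R t)
    (hode : ∀ t ∈ Set.Icc (0 : ℝ) T, ∀ i,
      HasDerivWithinAt (fun s => α s i) (r t i / R t) (Set.Icc (0 : ℝ) T) t) :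
    ∀ t ∈ Set.Icc (0 : ℝ) T, ∀ i : Fin k,
      0 ≤ r t i ∧ r t i ≤ μ * p i ∧
      0 ≤ r t i / R t ∧ r t i / R t ≤ 1 ∧
      0 ≤ α t i ∧ α t i ≤ min t (μ * p i / (μ ^ 2 * p i + σ ^ 2)) :=
  stmt13_general k μ σ hμ p hp T α hα0 r hr R hR hRpos hode
end

section
/- Let G be an invertible n×n real matrix. Let P be the unique positive-definite fourth root of G Gᵀ (i.e., P = sqrt(sqrt(G Gᵀ)) where sqrt denotes the unique positive-semidefinite square root) and let Q be the unique positive-definite fourth root of Gᵀ G. Then P⁻¹ G Q⁻¹ = G · (sqrt(Gᵀ G))⁻¹; moreover this matrix is orthogonal. In particular, if G = U Σ Vᵀ is a singular value decomposition with U, V orthogonal and Σ diagonal with positive entries, then P⁻¹ G Q⁻¹ = U Vᵀ. -/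
/-! Since `P⁴ G = G Gᵀ G = G Q⁴`, it suffices that for positive definite `A, B` the identity
`A² X = X B²` forces `A X = X B`: then `P G = G Q`. This holds because `M = A X - X B` solves the
Sylvester equation `A M + M B = 0`, and multiplying by `Mᴴ` and taking traces gives
`tr (Mᴴ A M) + tr (M B Mᴴ) = 0` with both terms nonnegative, so `Mᴴ A M = 0` and `M = 0`.
Hence `P⁻¹ G Q⁻¹ = G Q⁻²`, where `Q²` is the unique positive semidefinite square root of `Gᵀ G`;
so this is the orthogonal polar factor of `G`, which for `G = U Σ Vᵀ` is `U Vᵀ`. -/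

open Matrix
open scoped MatrixOrder ComplexOrder

namespace Matrix

section PosDef

variable {m 𝕜 : Type*} [Fintype m] [RCLike 𝕜]

theorem PosDef.pow [DecidableEq m] {A : Matrix m m 𝕜} (hA : A.PosDef) (k : ℕ) :
    (A ^ k).PosDef :=
  (hA.posSemidef.pow k).posDef_iff_isUnit.mpr (hA.isUnit.pow k)

theorem PosDef.eq_zero_of_conjTranspose_mul_mul_eq_zero {A M : Matrix m m 𝕜} (hA : A.PosDef)
    (h : Mᴴ * A * M = 0) : M = 0 := by
  refine ext_iff_mulVec.mpr fun x => ?_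
  rw [zero_mulVec]
  by_contra hx
  have hpos := hA.dotProduct_mulVec_pos hx
  have : star x ⬝ᵥ (Mᴴ * A * M) *ᵥ x = star (M *ᵥ x) ⬝ᵥ A *ᵥ (M *ᵥ x) := by
    simp only [star_mulVec, dotProduct_mulVec, vecMul_vecMul, mulVec_mulVec, Matrix.mul_assoc]
  rw [← this, h, zero_mulVec, dotProduct_zero] at hpos
  exact lt_irrefl _ hpos

theorem PosDef.eq_zero_of_mul_add_mul_eq_zero {A B M : Matrix m m 𝕜} (hA : A.PosDef)
    (hB : B.PosDef) (h : A * M + M * B = 0) : M = 0 := by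
  have hAM : (Mᴴ * A * M).PosSemidef := hA.posSemidef.conjTranspose_mul_mul_same M
  have hMB : (M * B * Mᴴ).PosSemidef := hB.posSemidef.mul_mul_conjTranspose_same M
  have htrace : (Mᴴ * A * M).trace + (M * B * Mᴴ).trace = 0 := by
    rw [trace_mul_comm (M * B), ← trace_add, Matrix.mul_assoc Mᴴ A, ← Matrix.mul_add, h,
      Matrix.mul_zero, trace_zero]
  have hzero : (Mᴴ * A * M).trace = 0 :=
    ((add_eq_zero_iff_of_nonneg hAM.trace_nonneg hMB.trace_nonneg).mp htrace).1
  exact hA.eq_zero_of_conjTranspose_mul_mul_eq_zero (hAM.trace_eq_zero_iff.mp hzero)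

theorem PosDef.mul_eq_mul_of_sq_mul_eq_mul_sq [DecidableEq m] {A B X : Matrix m m 𝕜}
    (hA : A.PosDef) (hB : B.PosDef) (h : A ^ 2 * X = X * B ^ 2) : A * X = X * B := by
  refine sub_eq_zero.mp (hA.eq_zero_of_mul_add_mul_eq_zero hB ?_)
  calc A * (A * X - X * B) + (A * X - X * B) * B = A ^ 2 * X - X * B ^ 2 := by
        simp only [sq]; noncomm_ring
    _ = 0 := sub_eq_zero.mpr h

end PosDef

variable {m R : Type*} [Fintype m] [DecidableEq m] [CommRing R]

theorem transpose_mul_self_eq_one_of_sq_eq {G S : Matrix m m R} (hS : Sᵀ = S) (hSu : IsUnit S)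
    (h : S ^ 2 = Gᵀ * G) : (G * S⁻¹)ᵀ * (G * S⁻¹) = 1 := by
  have hSinv : S⁻¹ * S = 1 := nonsing_inv_mul S ((isUnit_iff_isUnit_det S).mp hSu)
  calc (G * S⁻¹)ᵀ * (G * S⁻¹) = S⁻¹ * (Gᵀ * G) * S⁻¹ := by
        rw [transpose_mul, transpose_nonsing_inv, hS, Matrix.mul_assoc, Matrix.mul_assoc,
          Matrix.mul_assoc]
    _ = 1 := by
        rw [← h, sq, ← Matrix.mul_assoc S⁻¹, hSinv, Matrix.one_mul,
          mul_nonsing_inv S ((isUnit_iff_isUnit_det S).mp hSu)]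

theorem sq_mul_diagonal_mul_transpose {U V : Matrix m m R} (s : m → R) (hU : U * Uᵀ = 1)
    (hV : V * Vᵀ = 1) :
    (V * diagonal s * Vᵀ) ^ 2 = (U * diagonal s * Vᵀ)ᵀ * (U * diagonal s * Vᵀ) := by
  have hUU : Uᵀ * U = 1 := mul_eq_one_comm.mp hU
  have hVV : Vᵀ * V = 1 := mul_eq_one_comm.mp hV
  rw [sq, transpose_mul, transpose_mul, transpose_transpose, diagonal_transpose]
  simp only [Matrix.mul_assoc]
  rw [← Matrix.mul_assoc Vᵀ V, ← Matrix.mul_assoc Uᵀ U, hUU, hVV]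

theorem mul_diagonal_mul_transpose_mul_inv {K : Type*} [Field K] {U V : Matrix m m K}
    {s : m → K} (hV : V * Vᵀ = 1) (hs : ∀ i, s i ≠ 0) :
    U * diagonal s * Vᵀ * (V * diagonal s * Vᵀ)⁻¹ = U * Vᵀ := by
  have hVV : Vᵀ * V = 1 := mul_eq_one_comm.mp hV
  have hss : diagonal s * diagonal s⁻¹ = 1 := by
    rw [diagonal_mul_diagonal, ← diagonal_one]
    exact congrArg diagonal (funext fun i => mul_inv_cancel₀ (hs i))
  have hinv : (V * diagonal s * Vᵀ)⁻¹ = V * diagonal s⁻¹ * Vᵀ := by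
    refine inv_eq_right_inv ?_
    simp only [Matrix.mul_assoc]
    rw [← Matrix.mul_assoc Vᵀ V, hVV, Matrix.one_mul, ← Matrix.mul_assoc (diagonal s), hss,
      Matrix.one_mul, hV]
  rw [hinv]
  simp only [Matrix.mul_assoc]
  rw [← Matrix.mul_assoc Vᵀ V, hVV, Matrix.one_mul, ← Matrix.mul_assoc (diagonal s), hss,
      Matrix.one_mul]

end Matrix

theorem stmt15_general (n : ℕ) (G : Matrix (Fin n) (Fin n) ℝ)
    (Pm Qm : Matrix (Fin n) (Fin n) ℝ)
    (hPpd : Pm.PosDef) (hP4 : Pm ^ 4 = G * Gᵀ)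
    (hQpd : Qm.PosDef) (hQ4 : Qm ^ 4 = Gᵀ * G) :
    (∀ S : Matrix (Fin n) (Fin n) ℝ, S.PosSemidef → S ^ 2 = Gᵀ * G →
      Pm⁻¹ * G * Qm⁻¹ = G * S⁻¹) ∧
    ((Pm⁻¹ * G * Qm⁻¹)ᵀ * (Pm⁻¹ * G * Qm⁻¹) = 1 ∧
      (Pm⁻¹ * G * Qm⁻¹) * (Pm⁻¹ * G * Qm⁻¹)ᵀ = 1) ∧
    (∀ (U V : Matrix (Fin n) (Fin n) ℝ) (s : Fin n → ℝ),
      U * Uᵀ = 1 → V * Vᵀ = 1 → (∀ i, 0 < s i) →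
      G = U * Matrix.diagonal s * Vᵀ →
      Pm⁻¹ * G * Qm⁻¹ = U * Vᵀ) := by
  have hPG : Pm * G = G * Qm := by
    refine hPpd.mul_eq_mul_of_sq_mul_eq_mul_sq hQpd
      ((hPpd.pow 2).mul_eq_mul_of_sq_mul_eq_mul_sq (hQpd.pow 2) ?_)
    rw [← pow_mul, ← pow_mul, hP4, hQ4, Matrix.mul_assoc]
  have hW : Pm⁻¹ * G * Qm⁻¹ = G * (Qm ^ 2)⁻¹ := by
    have := hPpd.isUnit.invertible
    have := hQpd.isUnit.invertible
    have hswap : Pm⁻¹ * G = G * Qm⁻¹ := by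
      rw [inv_mul_eq_iff_eq_mul_of_invertible, ← Matrix.mul_assoc, hPG, Matrix.mul_assoc,
        mul_inv_of_invertible, Matrix.mul_one]
    rw [hswap, ← inv_pow', sq, Matrix.mul_assoc]
  have hroot : ∀ S : Matrix (Fin n) (Fin n) ℝ, S.PosSemidef → S ^ 2 = Gᵀ * G → S = Qm ^ 2 :=
    fun S hS hS2 => (CFC.sq_eq_sq_iff S (Qm ^ 2) hS.nonneg (hQpd.posSemidef.pow 2).nonneg).mp
      (by rw [hS2, ← hQ4, ← pow_mul])
  have hpolar : ∀ S : Matrix (Fin n) (Fin n) ℝ, S.PosSemidef → S ^ 2 = Gᵀ * G →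
      Pm⁻¹ * G * Qm⁻¹ = G * S⁻¹ := fun S hS hS2 => by rw [hW, hroot S hS hS2]
  refine ⟨hpolar, ?_, ?_⟩
  · have hsymm : (Qm ^ 2)ᵀ = Qm ^ 2 := by
      simpa [conjTranspose_eq_transpose_of_trivial] using (hQpd.pow 2).isHermitian.eq
    have horth := transpose_mul_self_eq_one_of_sq_eq hsymm (hQpd.pow 2).isUnit
      (by rw [← pow_mul, hQ4])
    rw [hW]
    exact ⟨horth, mul_eq_one_comm.mp horth⟩
  · intro U V s hU hV hs hGsvd
    subst hGsvd
    have hpsd : (V * diagonal s * Vᵀ).PosSemidef := by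
      simpa [conjTranspose_eq_transpose_of_trivial] using
        (PosSemidef.diagonal fun i => (hs i).le).mul_mul_conjTranspose_same V
    rw [hpolar _ hpsd (sq_mul_diagonal_mul_transpose s hU hV),
      mul_diagonal_mul_transpose_mul_inv hV fun i => (hs i).ne']

/-- Reduction of Shampoo without accumulations to Spectral Gradient
Descent: let `G` be an invertible `n×n` real matrix, `P` the unique positive-definite fourth
root of `G Gᵀ` and `Q` the unique positive-definite fourth root of `Gᵀ G`. Then
`P⁻¹ G Q⁻¹ = G · (sqrt(Gᵀ G))⁻¹` (for any positive-semidefinite square root `S` of `Gᵀ G`),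
this matrix is orthogonal, and if `G = U Σ Vᵀ` is an SVD with `U, V` orthogonal and `Σ`
diagonal with positive entries then `P⁻¹ G Q⁻¹ = U Vᵀ`. -/
theorem stmt15 (n : ℕ) (G : Matrix (Fin n) (Fin n) ℝ) (hG : IsUnit G)
    (Pm Qm : Matrix (Fin n) (Fin n) ℝ)
    (hPpd : Pm.PosDef) (hP4 : Pm ^ 4 = G * Gᵀ)
    (hQpd : Qm.PosDef) (hQ4 : Qm ^ 4 = Gᵀ * G) :
    (∀ S : Matrix (Fin n) (Fin n) ℝ, S.PosSemidef → S ^ 2 = Gᵀ * G →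
      Pm⁻¹ * G * Qm⁻¹ = G * S⁻¹) ∧
    ((Pm⁻¹ * G * Qm⁻¹)ᵀ * (Pm⁻¹ * G * Qm⁻¹) = 1 ∧
      (Pm⁻¹ * G * Qm⁻¹) * (Pm⁻¹ * G * Qm⁻¹)ᵀ = 1) ∧
    (∀ (U V : Matrix (Fin n) (Fin n) ℝ) (s : Fin n → ℝ),
      U * Uᵀ = 1 → V * Vᵀ = 1 → (∀ i, 0 < s i) →
      G = U * Matrix.diagonal s * Vᵀ →
      Pm⁻¹ * G * Qm⁻¹ = U * Vᵀ) :=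
  stmt15_general n G Pm Qm hPpd hP4 hQpd hQ4
end
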